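/- Conditional law given the component counts (Proposition 2.2(b)): suppose S_j := Σ_{x∈ℤ^d} exp(−j·V(x/L)) ∈ (0,∞) for every j ≥ 1. Let (ρ_j)_{j≥1} be a finitely supported sequence of nonnegative integers with Σ_j j·ρ_j = n, with θ_j > 0 whenever ρ_j ≥ 1. Then for every r ∈ Λ_n with r_j(r) = ρ_j for all j, the conditional probability P_{L,n}({r} | {r' : r_j(r') = ρ_j for all j}) equals ∏_{j≥1} [ (ρ_j! / ∏_{x∈ℤ^d} r_{x,j}!) · ∏_{x∈ℤ^d} p_{x,j}^{r_{x,j}} ], where p_{x,j} = exp(−j·V(x/L))/S_j; that is, given the component counts, for each j the ρ_j components of size j are placed on sites independently according to the multinomial law with probabilities (p_{x,j})_x. -/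

import Mathlib

open scoped BigOperators ENNReal NNReal
open Filter MeasureTheory

namespace Spart

/-- `exp(-t)` for an extended-real `t`, with `exp(-∞) = 0`. -/
noncomputable def expNeg (t : ℝ≥0∞) : ℝ := if t = ∞ then 0 else Real.exp (-t.toReal)

/-- Sites of the lattice `ℤ^d`. -/
abbrev Site (d : ℕ) := Fin d → ℤ

/-- A spatial partition: a finitely supported family `(r_{x,j})` of natural numbers.
(Only indices `j ≥ 1` are meaningful; configurations are supported on `j ≥ 1`.) -/
abbrev Config (d : ℕ) := (Site d × ℕ) →₀ ℕ

/-- The rescaled site `x/L ∈ ℝ^d`. -/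
noncomputable def scaledSite {d : ℕ} (x : Site d) (L : ℝ) : Fin d → ℝ :=
  fun i => (x i : ℝ) / L

/-- Site occupation number `η_x(r) = Σ_j j r_{x,j}`. -/
noncomputable def siteOcc {d : ℕ} (r : Config d) (x : Site d) : ℕ :=
  ∑ p ∈ r.support, if p.1 = x then p.2 * r p else 0

/-- Component counts `r_j(r) = Σ_x r_{x,j}`. -/
noncomputable def compCount {d : ℕ} (r : Config d) (j : ℕ) : ℕ :=
  ∑ p ∈ r.support, if p.2 = j then r p else 0

/-- Total mass `Σ_{x,j} j r_{x,j}`. -/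
noncomputable def mass {d : ℕ} (r : Config d) : ℕ :=
  ∑ p ∈ r.support, p.2 * r p

/-- The (unnormalized) weight of a spatial partition. -/
noncomputable def W {d : ℕ} (V : (Fin d → ℝ) → ℝ≥0∞) (θ : ℕ → ℝ) (L : ℝ) (r : Config d) : ℝ :=
  ∏ p ∈ r.support,
    (1 / (Nat.factorial (r p)) : ℝ) *
      ((θ p.2 / (p.2 : ℝ)) * expNeg ((p.2 : ℝ≥0∞) * V (scaledSite p.1 L))) ^ (r p)

/-- The canonical partition function `Z_{L,n}`. -/
noncomputable def Z {d : ℕ} (V : (Fin d → ℝ) → ℝ≥0∞) (θ : ℕ → ℝ) (L : ℝ) (n : ℕ) : ℝ :=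
  ∑' r : {r : Config d // mass r = n}, W V θ L (r : Config d)

/-- The probability of an event under the canonical measure `P_{L,n}`. -/
noncomputable def P {d : ℕ} (V : (Fin d → ℝ) → ℝ≥0∞) (θ : ℕ → ℝ) (L : ℝ) (n : ℕ)
    (E : Set (Config d)) : ℝ :=
  (∑' r : {r : Config d // mass r = n ∧ r ∈ E}, W V θ L (r : Config d)) / Z V θ L n

/-- Expectation of an observable under the canonical measure `P_{L,n}`. -/
noncomputable def Ex {d : ℕ} (V : (Fin d → ℝ) → ℝ≥0∞) (θ : ℕ → ℝ) (L : ℝ) (n : ℕ)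
    (f : Config d → ℝ) : ℝ :=
  (∑' r : {r : Config d // mass r = n}, f (r : Config d) * W V θ L (r : Config d)) / Z V θ L n

/-- Single-site normalization `h_m = Σ_{λ ⊢ m} ∏_j (1/ρ_j(λ)!) (θ_j/j)^{ρ_j(λ)}`. -/
noncomputable def hcoef (θ : ℕ → ℝ) (m : ℕ) : ℝ :=
  ∑ lam : Nat.Partition m, ∏ j ∈ lam.parts.toFinset,
    (1 / (Nat.factorial (Multiset.count j lam.parts)) : ℝ) *
      (θ j / (j : ℝ)) ^ (Multiset.count j lam.parts)

end Spart

open Finset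
open scoped Nat

/-!
Given the component counts `ρ`, a spatial partition is the same thing as an independent choice,
for each size `j` with `ρ_j ≠ 0`, of a placement `x ↦ r_{x,j}` of `ρ_j` components on the sites,
and `W` factorises over these placements as
`∏_j ∏_x (θ_j/j · e^{-jV(x/L)})^{r_{x,j}} / r_{x,j}!`. Summing each factor over all placements is
the multinomial theorem over infinitely many sites,
`∑_{|f| = m} ∏_x a_x^{f_x} / f_x! = (∑_x a_x)^m / m!`, so the conditional probability of `r` is its
weight divided by `∏_j (θ_j/j · S_j)^{ρ_j} / ρ_j!`, which is the product of multinomial laws.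
-/

namespace ENNReal

universe u

theorem tsum_fin_pi_prod : ∀ (n : ℕ) (κ : Fin n → Type u) (g : ∀ i, κ i → ℝ≥0∞),
    ∑' f : ∀ i, κ i, ∏ i, g i (f i) = ∏ i, ∑' x, g i x
  | 0, κ, g => by simp [tsum_fintype]
  | n + 1, κ, g => by
    rw [← (Fin.consEquiv κ).tsum_eq, ENNReal.tsum_prod', Fin.prod_univ_succ,
      ← tsum_fin_pi_prod n (fun i => κ i.succ) (fun i => g i.succ), ← ENNReal.tsum_mul_right]
    simp [Fin.consEquiv, Fin.prod_univ_succ, ENNReal.tsum_mul_left]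

theorem tsum_pi_prod {ι : Type*} [Fintype ι] (κ : ι → Type u) (g : ∀ i, κ i → ℝ≥0∞) :
    ∑' f : ∀ i, κ i, ∏ i, g i (f i) = ∏ i, ∑' x, g i x := by
  let e := Fintype.equivFin ι
  rw [← (Equiv.piCongrLeft' κ e).symm.tsum_eq, ← e.symm.prod_comp]
  simpa [← e.symm.prod_comp] using
    tsum_fin_pi_prod _ (fun j => κ (e.symm j)) (fun j => g (e.symm j))

theorem sum_piAntidiag_prod_pow_div_factorial {ι : Type*} [DecidableEq ι] (s : Finset ι)
    (a : ι → ℝ≥0∞) (m : ℕ) :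
    ∑ k ∈ piAntidiag s m, ∏ i ∈ s, a i ^ k i / (k i)! = (∑ i ∈ s, a i) ^ m / m ! := by
  rw [sum_pow_eq_sum_piAntidiag, div_eq_mul_inv, Finset.sum_mul]
  refine sum_congr rfl fun k hk => ?_
  rw [← div_eq_mul_inv, ← (mem_piAntidiag.1 hk).1, ← Nat.multinomial_spec, Nat.cast_mul,
    mul_comm, ENNReal.mul_div_mul_right _ _ (by simp [(Nat.multinomial_pos s k).ne']) (by simp),
    Nat.cast_prod, prod_div_distrib_of_ne_top (by simp)]

theorem sum_finsuppAntidiag_prod_pow_div_factorial {ι : Type*} [DecidableEq ι] (s : Finset ι)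
    (a : ι → ℝ≥0∞) (m : ℕ) :
    ∑ f ∈ finsuppAntidiag s m, f.prod (fun i k => a i ^ k / k !) = (∑ i ∈ s, a i) ^ m / m ! := by
  rw [← sum_piAntidiag_prod_pow_div_factorial]
  simp only [finsuppAntidiag, sum_map]
  rw [← sum_attach (piAntidiag s m)]
  refine sum_congr rfl fun k _ => prod_subset (filter_subset _ _) fun i _ hi => ?_
  simp_all

theorem tsum_prod_pow_div_factorial_of_degree_eq {ι : Type*} (a : ι → ℝ≥0∞) (m : ℕ) :
    ∑' f : {f : ι →₀ ℕ // f.degree = m}, f.1.prod (fun i k => a i ^ k / k !)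
      = (∑' i, a i) ^ m / m ! := by
  classical
  let S : Finset ι → Finset {f : ι →₀ ℕ // f.degree = m} := fun T =>
    (finsuppAntidiag T m).subtype _
  have hS : Tendsto S atTop atTop := by
    refine tendsto_atTop_finset_of_monotone (fun T T' h => ?_) fun f => ⟨f.1.support, ?_⟩
    · exact fun f hf => mem_subtype.2 (finsuppAntidiag_mono h m (mem_subtype.1 hf))
    · exact mem_subtype.2 (mem_finsuppAntidiag.2 ⟨f.2, subset_rfl⟩)
  have hsum : ∀ T, ∑ f ∈ S T, f.1.prod (fun i k => a i ^ k / k !)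
      = (∑ i ∈ T, a i) ^ m / m ! := fun T => by
    simp only [S]
    rw [sum_subtype_of_mem (fun f => f.prod fun i k => a i ^ k / k !)
      (p := fun f : ι →₀ ℕ => f.degree = m), sum_finsuppAntidiag_prod_pow_div_factorial]
    intro f hf
    rw [Finsupp.degree_apply, ← (mem_finsuppAntidiag.1 hf).1]
    exact sum_subset (mem_finsuppAntidiag.1 hf).2 (by simp)
  refine tendsto_nhds_unique ((ENNReal.summable.hasSum.comp hS).congr hsum) ?_
  exact ENNReal.Tendsto.div_const (ENNReal.Tendsto.pow (ENNReal.summable.hasSum (f := a)))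
    (Or.inr (Nat.cast_ne_zero.2 m.factorial_ne_zero))

end ENNReal

namespace Real

-- Also for non-summable `f`: both sides are then `0`.
theorem tsum_eq_toReal_tsum_ofReal {α : Type*} {f : α → ℝ} (hf : ∀ a, 0 ≤ f a) :
    ∑' a, f a = (∑' a, ENNReal.ofReal (f a)).toReal := by
  rw [ENNReal.tsum_toReal_eq fun _ => ENNReal.ofReal_ne_top]
  exact tsum_congr fun a => (ENNReal.toReal_ofReal (hf a)).symm

theorem tsum_pi_prod_of_nonneg {ι : Type*} [Fintype ι] (κ : ι → Type*) (g : ∀ i, κ i → ℝ)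
    (hg : ∀ i x, 0 ≤ g i x) : ∑' f : ∀ i, κ i, ∏ i, g i (f i) = ∏ i, ∑' x, g i x := by
  rw [tsum_eq_toReal_tsum_ofReal fun f => prod_nonneg fun i _ => hg i (f i),
    tsum_congr fun f => ENNReal.ofReal_prod_of_nonneg fun i _ => hg i (f i),
    ENNReal.tsum_pi_prod κ fun i x => ENNReal.ofReal (g i x), ENNReal.toReal_prod]
  exact prod_congr rfl fun i _ => (tsum_eq_toReal_tsum_ofReal (hg i)).symm

theorem tsum_prod_pow_div_factorial_of_degree_eq {ι : Type*} {a : ι → ℝ} (ha : ∀ i, 0 ≤ a i)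
    (m : ℕ) :
    ∑' f : {f : ι →₀ ℕ // f.degree = m}, f.1.prod (fun i k => a i ^ k / k !)
      = (∑' i, a i) ^ m / m ! := by
  have hterm : ∀ i k, 0 ≤ a i ^ k / k ! := fun i k => by positivity [ha i]
  have hofReal : ∀ f : ι →₀ ℕ, ENNReal.ofReal (f.prod fun i k => a i ^ k / k !)
      = f.prod fun i k => ENNReal.ofReal (a i) ^ k / k ! := fun f => by
    rw [Finsupp.prod, ENNReal.ofReal_prod_of_nonneg fun i _ => hterm i _]
    refine prod_congr rfl fun i _ => ?_
    rw [ENNReal.ofReal_div_of_pos (by positivity), ENNReal.ofReal_pow (ha i),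
      ENNReal.ofReal_natCast]
  have hnonneg : ∀ f : ι →₀ ℕ, 0 ≤ f.prod fun i k => a i ^ k / k ! :=
    fun f => prod_nonneg fun i _ => hterm i _
  rw [tsum_eq_toReal_tsum_ofReal fun f : {f : ι →₀ ℕ // f.degree = m} => hnonneg f.1]
  simp_rw [hofReal]
  rw [ENNReal.tsum_prod_pow_div_factorial_of_degree_eq, ENNReal.toReal_div, ENNReal.toReal_pow,
    ENNReal.toReal_natCast, ← tsum_eq_toReal_tsum_ofReal ha]

end Real

theorem Finsupp.prod_uncurry_index {α β M N : Type*} [Zero M] [CommMonoid N]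
    (f : α →₀ β →₀ M) (g : α × β → M → N) :
    f.uncurry.prod g = f.prod fun a f => f.prod fun b => g (a, b) := by
  simp [Finsupp.prod, Finsupp.uncurry, Finset.prod_disjiUnion]

theorem prod_pow_div_factorial_div_eq_multinomial {ι K : Type*} [Field K] [CharZero K]
    (X : Finset ι) (k : ι → ℕ) (a : ι → K) {c S : K} (hc : c ≠ 0) (hS : S ≠ 0) :
    (∏ x ∈ X, (c * a x) ^ k x / (k x)!) / ((c * S) ^ (∑ x ∈ X, k x) / (∑ x ∈ X, k x)!)
      = ((∑ x ∈ X, k x)! / ∏ x ∈ X, ((k x)! : K)) * ∏ x ∈ X, (a x / S) ^ k x := by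
  simp only [mul_pow, div_pow, prod_div_distrib, prod_mul_distrib, prod_pow_eq_pow_sum]
  field_simp

namespace Finsupp

noncomputable def subtypeForallEquivPi {α M : Type*} [Zero M] [DecidableEq α] (s : Finset α)
    (P : α → M → Prop) (hP : ∀ a ∉ s, ∀ m, P a m ↔ m = 0) :
    {f : α →₀ M // ∀ a, P a (f a)} ≃ ∀ a : s, {m // P a m} where
  toFun f a := ⟨f.1 a, f.2 a⟩
  invFun g := ⟨Finsupp.onFinset s (fun a => if h : a ∈ s then (g ⟨a, h⟩).1 else 0)
      (fun a ha => by by_contra h; simp [h] at ha),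
    fun a => by
      by_cases h : a ∈ s
      · simpa [h] using (g ⟨a, h⟩).2
      · simp [h, hP]⟩
  left_inv f := by
    ext a
    by_cases h : a ∈ s
    · simp [h]
    · simp [h, (hP a h _).1 (f.2 a)]
  right_inv g := by
    funext a
    simp

end Finsupp

namespace Spart

section

variable {d : ℕ}

lemma expNeg_nonneg (t : ℝ≥0∞) : 0 ≤ expNeg t := by
  unfold expNeg
  split_ifs <;> positivity

noncomputable def boltzmannWeight (V : (Fin d → ℝ) → ℝ≥0∞) (L : ℝ) (j : ℕ) (x : Site d) : ℝ :=
  expNeg ((j : ℝ≥0∞) * V (scaledSite x L))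

noncomputable def bySize : Config d ≃ (ℕ →₀ Site d →₀ ℕ) :=
  (Finsupp.equivCongrLeft (Equiv.prodComm _ _)).trans Finsupp.curryEquiv

@[simp] lemma bySize_apply (r : Config d) (j : ℕ) (x : Site d) : bySize r j x = r (x, j) := rfl

lemma prod_eq_prod_bySize {N : Type*} [CommMonoid N] (r : Config d) (g : Site d × ℕ → ℕ → N) :
    r.prod g = (bySize r).prod fun j f => f.prod fun x => g (x, j) := by
  calc r.prod g = (Finsupp.equivCongrLeft (Equiv.prodComm _ _) r).prod fun q => g q.swap := by
        simp [Finsupp.equivCongrLeft_apply]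
    _ = (bySize r).uncurry.prod fun q => g q.swap := by simp [bySize]
    _ = _ := Finsupp.prod_uncurry_index _ _

lemma sum_eq_sum_bySize {N : Type*} [AddCommMonoid N] (r : Config d) (g : Site d × ℕ → ℕ → N) :
    r.sum g = (bySize r).sum fun j f => f.sum fun x => g (x, j) := by
  calc r.sum g = (Finsupp.equivCongrLeft (Equiv.prodComm _ _) r).sum fun q => g q.swap := by
        simp [Finsupp.equivCongrLeft_apply]
    _ = (bySize r).uncurry.sum fun q => g q.swap := by simp [bySize]
    _ = _ := Finsupp.sum_uncurry_index _ _

lemma compCount_eq_degree (r : Config d) (j : ℕ) : compCount r j = (bySize r j).degree := by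
  show r.sum (fun p k => if p.2 = j then k else 0) = _
  rw [sum_eq_sum_bySize, Finsupp.sum, Finset.sum_eq_single j (fun j' _ hj' => by simp [hj'])
    (fun hj => by simp [Finsupp.notMem_support_iff.1 hj])]
  simp [Finsupp.sum, Finsupp.degree_apply]

lemma mass_eq_sum_bySize (r : Config d) : mass r = (bySize r).sum fun j f => j * f.degree := by
  show r.sum (fun p k => p.2 * k) = _
  rw [sum_eq_sum_bySize]
  simp [Finsupp.degree_apply, Finsupp.sum, Finset.mul_sum]

lemma support_bySize {r : Config d} {ρ : ℕ →₀ ℕ} (h : ∀ j, compCount r j = ρ j) :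
    (bySize r).support = ρ.support := by
  ext j
  simp [← Finsupp.degree_eq_zero_iff, ← compCount_eq_degree, h]

lemma support_bySize_apply_subset (r : Config d) (j : ℕ) :
    (bySize r j).support ⊆ r.support.image Prod.fst :=
  fun x hx => mem_image.2 ⟨(x, j), by simpa using hx, rfl⟩

lemma mass_eq_of_compCount {r : Config d} {ρ : ℕ →₀ ℕ} {n : ℕ}
    (hρn : ∑ j ∈ ρ.support, j * ρ j = n) (h : ∀ j, compCount r j = ρ j) : mass r = n := by
  rw [mass_eq_sum_bySize, Finsupp.sum, support_bySize h, ← hρn]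
  simp [← compCount_eq_degree, h]

noncomputable def compCountEquiv (ρ : ℕ →₀ ℕ) (n : ℕ) (hρn : ∑ j ∈ ρ.support, j * ρ j = n) :
    {r : Config d // mass r = n ∧ r ∈ {r' : Config d | ∀ j, compCount r' j = ρ j}} ≃
      ∀ j : ρ.support, {f : Site d →₀ ℕ // f.degree = ρ j} :=
  (bySize.subtypeEquiv (q := fun F : ℕ →₀ Site d →₀ ℕ => ∀ j, (F j).degree = ρ j) fun r => by
      simp only [Set.mem_ofPred_eq, ← compCount_eq_degree]
      exact ⟨And.right, fun h => ⟨mass_eq_of_compCount hρn h, h⟩⟩).trans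
    (Finsupp.subtypeForallEquivPi ρ.support (fun j (f : Site d →₀ ℕ) => f.degree = ρ j)
      fun j hj f => by rw [Finsupp.notMem_support_iff.1 hj, Finsupp.degree_eq_zero_iff])

lemma W_eq_prod_bySize (V : (Fin d → ℝ) → ℝ≥0∞) (θ : ℕ → ℝ) (L : ℝ) {r : Config d}
    {s : Finset ℕ} (hs : (bySize r).support ⊆ s) :
    W V θ L r = ∏ j ∈ s,
      (bySize r j).prod fun x k => (θ j / j * boltzmannWeight V L j x) ^ k / k ! := by
  show r.prod (fun p k => 1 / (k ! : ℝ) * (θ p.2 / p.2 * boltzmannWeight V L p.2 p.1) ^ k) = _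
  rw [prod_eq_prod_bySize, Finsupp.prod_of_support_subset _ hs _ fun _ _ => Finsupp.prod_zero_index]
  simp_rw [one_div_mul_eq_div]

lemma P_singleton (V : (Fin d → ℝ) → ℝ≥0∞) (θ : ℕ → ℝ) (L : ℝ) {n : ℕ} {r : Config d}
    (hr : mass r = n) : P V θ L n {r} = W V θ L r / Z V θ L n := by
  rw [P, tsum_eq_single ⟨r, hr, rfl⟩ fun r' hr' => absurd (Subtype.ext r'.2.2) hr']

lemma tsum_W_of_compCount_eq (V : (Fin d → ℝ) → ℝ≥0∞) (θ : ℕ → ℝ) (L : ℝ) {ρ : ℕ →₀ ℕ} {n : ℕ}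
    (hρn : ∑ j ∈ ρ.support, j * ρ j = n) (hθρ : ∀ j, 1 ≤ ρ j → 0 < θ j) :
    ∑' r : {r : Config d // mass r = n ∧ r ∈ {r' : Config d | ∀ j, compCount r' j = ρ j}},
        W V θ L r
      = ∏ j ∈ ρ.support, (θ j / j * ∑' x, boltzmannWeight V L j x) ^ ρ j / (ρ j)! := by
  set b : ℕ → Site d → ℝ := fun j x => θ j / j * boltzmannWeight V L j x
  have hb : ∀ j ∈ ρ.support, ∀ x, 0 ≤ b j x := fun j hj x =>
    mul_nonneg (div_nonneg (hθρ j (Nat.one_le_iff_ne_zero.2 (Finsupp.mem_support_iff.1 hj))).le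
      j.cast_nonneg) (expNeg_nonneg _)
  let G : ∀ j : ρ.support, {f : Site d →₀ ℕ // f.degree = ρ j} → ℝ :=
    fun j f => f.1.prod fun x k => b j x ^ k / (k ! : ℝ)
  calc _ = ∑' r, ∏ j, G j (compCountEquiv ρ n hρn r j) := tsum_congr fun r => by
          rw [W_eq_prod_bySize V θ L (support_bySize r.2.2).subset, ← prod_coe_sort]
          rfl
    _ = ∏ j, ∑' f, G j f := by
          rw [(compCountEquiv ρ n hρn).tsum_eq fun F => ∏ j, G j (F j)]
          exact Real.tsum_pi_prod_of_nonneg _ G fun j f => prod_nonneg fun x _ =>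
            div_nonneg (pow_nonneg (hb j j.2 x) _) (Nat.cast_nonneg _)
    _ = ∏ j ∈ ρ.support, (∑' x, b j x) ^ ρ j / (ρ j)! := by
          rw [← prod_coe_sort ρ.support]
          exact Fintype.prod_congr _ _ fun j =>
            Real.tsum_prod_pow_div_factorial_of_degree_eq (hb j j.2) _
    _ = _ := by simp_rw [b, tsum_mul_left]

end

theorem statement3_general (d : ℕ)
    (V : (Fin d → ℝ) → ℝ≥0∞) (θ : ℕ → ℝ) (L : ℝ) (n : ℕ)
    (hZpos : 0 < Z V θ L n)
    (hSpos : ∀ j : ℕ, 1 ≤ j →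
      0 < ∑' x : Site d, expNeg ((j : ℝ≥0∞) * V (scaledSite x L)))
    (ρv : ℕ →₀ ℕ) (hρ0 : ρv 0 = 0) (hρn : ∑ j ∈ ρv.support, j * ρv j = n)
    (hθρ : ∀ j : ℕ, 1 ≤ ρv j → 0 < θ j)
    (r : Config d) (hmass : mass r = n)
    (hrρ : ∀ j : ℕ, compCount r j = ρv j) :
    P V θ L n {r} / P V θ L n {r' | ∀ j : ℕ, compCount r' j = ρv j}
      = ∏ j ∈ ρv.support,
          (((Nat.factorial (ρv j) : ℝ) /
              ∏ x ∈ r.support.image Prod.fst, (Nat.factorial (r (x, j)) : ℝ)) *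
            ∏ x ∈ r.support.image Prod.fst,
              (expNeg ((j : ℝ≥0∞) * V (scaledSite x L)) /
                  ∑' y : Site d, expNeg ((j : ℝ≥0∞) * V (scaledSite y L))) ^ (r (x, j))) := by
  rw [P_singleton V θ L hmass, P, div_div_div_cancel_right₀ hZpos.ne',
    tsum_W_of_compCount_eq V θ L hρn hθρ, W_eq_prod_bySize V θ L (support_bySize hrρ).subset,
    ← prod_div_distrib]
  refine prod_congr rfl fun j hj => ?_
  have hρj : 1 ≤ ρv j := Nat.one_le_iff_ne_zero.2 (Finsupp.mem_support_iff.1 hj)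
  have hj0 : j ≠ 0 := by rintro rfl; omega
  have hsum : ∑ x ∈ r.support.image Prod.fst, r (x, j) = ρv j := by
    rw [← hrρ, compCount_eq_degree, Finsupp.degree_apply]
    exact (sum_subset (support_bySize_apply_subset r j) (by simp)).symm
  rw [Finsupp.prod_of_support_subset _ (support_bySize_apply_subset r j) _ (by simp), ← hsum]
  exact prod_pow_div_factorial_div_eq_multinomial _ _ _
    (div_ne_zero (hθρ j hρj).ne' (Nat.cast_ne_zero.2 hj0))
    (hSpos j (Nat.one_le_iff_ne_zero.2 hj0)).ne'

/-- Proposition 2.2(b): conditional law given the component counts is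
multinomial with probabilities `p_{x,j} = exp(-jV(x/L))/S_j`. -/
theorem statement3 (d : ℕ) (hd : 1 ≤ d)
    (V : (Fin d → ℝ) → ℝ≥0∞) (θ : ℕ → ℝ) (L : ℝ) (n : ℕ)
    (hL : 0 < L) (hθ : ∀ j, 1 ≤ j → 0 ≤ θ j)
    (hZsum : Summable (fun r : {r : Config d // mass r = n} => W V θ L (r : Config d)))
    (hZpos : 0 < Z V θ L n)
    (hSsum : ∀ j : ℕ, 1 ≤ j →
      Summable (fun x : Site d => expNeg ((j : ℝ≥0∞) * V (scaledSite x L))))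
    (hSpos : ∀ j : ℕ, 1 ≤ j →
      0 < ∑' x : Site d, expNeg ((j : ℝ≥0∞) * V (scaledSite x L)))
    (ρv : ℕ →₀ ℕ) (hρ0 : ρv 0 = 0) (hρn : ∑ j ∈ ρv.support, j * ρv j = n)
    (hθρ : ∀ j : ℕ, 1 ≤ ρv j → 0 < θ j)
    (hEpos : 0 < P V θ L n {r' | ∀ j : ℕ, compCount r' j = ρv j})
    (r : Config d) (hmass : mass r = n) (hr0 : ∀ x : Site d, r (x, 0) = 0)
    (hrρ : ∀ j : ℕ, compCount r j = ρv j) :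
    P V θ L n {r} / P V θ L n {r' | ∀ j : ℕ, compCount r' j = ρv j}
      = ∏ j ∈ ρv.support,
          (((Nat.factorial (ρv j) : ℝ) /
              ∏ x ∈ r.support.image Prod.fst, (Nat.factorial (r (x, j)) : ℝ)) *
            ∏ x ∈ r.support.image Prod.fst,
              (expNeg ((j : ℝ≥0∞) * V (scaledSite x L)) /
                  ∑' y : Site d, expNeg ((j : ℝ≥0∞) * V (scaledSite y L))) ^ (r (x, j))) :=
  statement3_general d V θ L n hZpos hSpos ρv hρ0 hρn hθρ r hmass hrρ

end Spart
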